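/- Let ν : ℝ³ → ℝ be measurable with ν₀(1+|v|) ≤ ν(v) ≤ ν₁(1+|v|) for constants ν₀, ν₁ > 0, and let M(v) = (2π)^{−3/2} e^{−|v|²/2}, χ₀ = √M, χ_j = v_j√M (j = 1,2,3), χ₄ = (|v|² − 3)√M/√6. Then there exists C > 0 depending only on ν₀, ν₁ such that for every ε ∈ [0,1], ξ ∈ ℝ³, δ > 0, λ ∈ ℂ with Re λ ≥ −ν₀ + δ, and every j ∈ {0, 1, 2, 3, 4}: ( ∫_{ℝ³} |χ_j(v)|² / |λ + ν(v) + iε v·ξ|² dv )^{1/2} ≤ C δ^{−1/2} (1 + ε|ξ|)^{−1/2}. -/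

import Mathlib

noncomputable section

open MeasureTheory

/-- The normalized global Maxwellian `M(v) = (2π)^{−3/2} e^{−|v|²/2}` on `ℝ³`. -/
def Mx (v : EuclideanSpace ℝ (Fin 3)) : ℝ :=
  (2 * Real.pi) ^ (-(3:ℝ)/2) * Real.exp (-‖v‖^2 / 2)

/-- The five basis functions `χ₀ = √M`, `χ_j = v_j √M` (`j = 1,2,3`),
`χ₄ = (|v|² − 3)√M/√6`. -/
def chiB (k : Fin 5) (v : EuclideanSpace ℝ (Fin 3)) : ℝ :=
  if k.val = 0 then Real.sqrt (Mx v)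
  else if k.val = 4 then (‖v‖^2 - 3) * Real.sqrt (Mx v) / Real.sqrt 6
  else v ⟨(k.val - 1) % 3, by omega⟩ * Real.sqrt (Mx v)

/-!
Since `χ_j² ≤ 96 e^{-|v|²/4}` and `Re λ + ν(v) ≥ δ + ν₀|v|`, the integral is at most
`96 ∫ e^{-|v|²/4} / ((δ + ν₀|v|)² + (Im λ + ε v·ξ)²) dv`.

If `ε|ξ| ≤ 1`, bound the denominator below by `δ (δ + ν₀|v|)`: in polar coordinates the Jacobian
`r²` absorbs `r / (δ + ν₀ r) ≤ 1 / ν₀`, so the integral is `O(1/δ)`.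

If `ε|ξ| > 1`, bound it below by `δ² + (Im λ + ε v·ξ)²` and take an orthonormal basis whose first
vector is `ξ / |ξ|`: the first coordinate gives a Cauchy integral `π / (δ ε|ξ|)` and the other two
give Gaussian integrals, so the integral is `O(1/(δ ε|ξ|))`.
-/

open Set Real Module Metric ProbabilityTheory

theorem integrable_and_integral_le_of_le {α : Type*} [MeasurableSpace α] {μ : Measure α}
    {f g : α → ℝ} (hg : Integrable g μ) (hf : AEStronglyMeasurable f μ) (hf0 : ∀ x, 0 ≤ f x)
    (hfg : ∀ x, f x ≤ g x) : Integrable f μ ∧ ∫ x, f x ∂μ ≤ ∫ x, g x ∂μ :=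
  ⟨hg.mono' hf (.of_forall fun x => (norm_of_nonneg (hf0 x)).trans_le (hfg x)),
    integral_mono_of_nonneg (.of_forall hf0) hg (.of_forall hfg)⟩

theorem Mx_nonneg (v : EuclideanSpace ℝ (Fin 3)) : 0 ≤ Mx v := by
  unfold Mx; positivity

theorem Mx_le_exp (v : EuclideanSpace ℝ (Fin 3)) : Mx v ≤ exp (-‖v‖ ^ 2 / 2) := by
  have h : (2 * π) ^ (-(3 : ℝ) / 2) ≤ 1 :=
    rpow_le_one_of_one_le_of_nonpos (by linarith [pi_gt_three]) (by norm_num)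
  exact mul_le_of_le_one_left (exp_pos _).le h

theorem sq_chiB_le_mul_Mx (j : Fin 5) (v : EuclideanSpace ℝ (Fin 3)) :
    chiB j v ^ 2 ≤ 3 / 2 * (1 + ‖v‖ ^ 2) ^ 2 * Mx v := by
  have hM : √(Mx v) ^ 2 = Mx v := sq_sqrt (Mx_nonneg v)
  have hM0 := Mx_nonneg v
  have hx := sq_nonneg ‖v‖
  have hcoord (i : Fin 3) : v i ^ 2 ≤ ‖v‖ ^ 2 := by
    simpa [sq_abs] using pow_le_pow_left₀ (norm_nonneg _) (PiLp.norm_apply_le v i) 2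
  unfold chiB
  split_ifs
  · rw [hM]; nlinarith [mul_nonneg hM0 hx, mul_nonneg hM0 (sq_nonneg (‖v‖ ^ 2))]
  · rw [div_pow, mul_pow, hM, sq_sqrt (by norm_num)]
    nlinarith [mul_nonneg hM0 hx, mul_nonneg hM0 (sq_nonneg (‖v‖ ^ 2))]
  · rw [mul_pow, hM]
    nlinarith [mul_nonneg hM0 (sub_nonneg.2 (hcoord ⟨(j.val - 1) % 3, by omega⟩)),
      mul_nonneg hM0 hx, mul_nonneg hM0 (sq_nonneg (‖v‖ ^ 2))]

theorem one_add_sq_le_exp {x : ℝ} (hx : 0 ≤ x) : (1 + x) ^ 2 ≤ 64 * exp (x / 4) := by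
  have h : 1 + x / 8 ≤ exp (x / 8) := by linarith [add_one_le_exp (x / 8)]
  calc (1 + x) ^ 2 ≤ 64 * (1 + x / 8) ^ 2 := by nlinarith
    _ ≤ 64 * exp (x / 8) ^ 2 := by gcongr
    _ = 64 * exp (x / 4) := by rw [← exp_nat_mul]; ring_nf

theorem sq_chiB_le_exp (j : Fin 5) (v : EuclideanSpace ℝ (Fin 3)) :
    chiB j v ^ 2 ≤ 96 * exp (-(1 / 4) * ‖v‖ ^ 2) := by
  have hx := sq_nonneg ‖v‖
  calc chiB j v ^ 2 ≤ 3 / 2 * (1 + ‖v‖ ^ 2) ^ 2 * Mx v := sq_chiB_le_mul_Mx j v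
    _ ≤ 3 / 2 * (64 * exp (‖v‖ ^ 2 / 4)) * exp (-‖v‖ ^ 2 / 2) := by
      gcongr
      exacts [Mx_nonneg v, one_add_sq_le_exp hx, Mx_le_exp v]
    _ = 96 * exp (-(1 / 4) * ‖v‖ ^ 2) := by rw [mul_assoc, mul_assoc, ← exp_add]; ring_nf

section RadialIntegral

variable {E : Type*} [NormedAddCommGroup E] [NormedSpace ℝ E] [FiniteDimensional ℝ E]
  [MeasurableSpace E] [BorelSpace E] (μ : Measure E) [μ.IsAddHaarMeasure]

theorem integrable_fun_norm_and_integral_fun_norm_le [Nontrivial E] {f g : ℝ → ℝ}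
    (hf : Measurable f)
    (hfg : ∀ r > 0, 0 ≤ f r ∧ r ^ (finrank ℝ E - 1) * f r ≤ g r)
    (hg : IntegrableOn g (Ioi 0)) :
    Integrable (fun x => f ‖x‖) μ ∧
      ∫ x, f ‖x‖ ∂μ ≤ finrank ℝ E * μ.real (ball 0 1) * ∫ r in Ioi 0, g r := by
  have hbound : ∀ r ∈ Ioi (0 : ℝ), ‖r ^ (finrank ℝ E - 1) * f r‖ ≤ g r := fun r hr => by
    obtain ⟨hf0, hle⟩ := hfg r hr
    rwa [Real.norm_of_nonneg (mul_nonneg (pow_nonneg (le_of_lt hr) _) hf0)]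
  have hint : IntegrableOn (fun r => r ^ (finrank ℝ E - 1) * f r) (Ioi 0) :=
    hg.mono' (by fun_prop) ((ae_restrict_iff' measurableSet_Ioi).2 (.of_forall hbound))
  refine ⟨(integrable_fun_norm_addHaar μ).2 hint, ?_⟩
  rw [integral_fun_norm_addHaar μ f, nsmul_eq_mul, smul_eq_mul, mul_assoc]
  simp_rw [smul_eq_mul]
  refine mul_le_mul_of_nonneg_left (mul_le_mul_of_nonneg_left ?_ measureReal_nonneg) (by positivity)
  exact setIntegral_mono_on hint hg measurableSet_Ioi fun r hr =>
    (le_abs_self _).trans (hbound r hr)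

theorem exists_integral_exp_neg_mul_sq_norm_div_le (hE : 2 ≤ finrank ℝ E) {a ν₀ : ℝ}
    (ha : 0 < a) (hν₀ : 0 < ν₀) :
    ∃ K ≥ 0, ∀ δ > 0, Integrable (fun x => exp (-a * ‖x‖ ^ 2) / (δ * (δ + ν₀ * ‖x‖))) μ ∧
      ∫ x, exp (-a * ‖x‖ ^ 2) / (δ * (δ + ν₀ * ‖x‖)) ∂μ ≤ K / δ := by
  obtain ⟨k, hk⟩ : ∃ k, finrank ℝ E = k + 2 := ⟨_, (Nat.sub_add_cancel hE).symm⟩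
  have : Nontrivial E := nontrivial_of_finrank_pos (R := ℝ) (by omega)
  have hg : IntegrableOn (fun r : ℝ => r ^ k * exp (-a * r ^ 2)) (Ioi 0) := by
    have := integrableOn_rpow_mul_exp_neg_mul_sq ha (s := k) (by linarith [k.cast_nonneg (α := ℝ)])
    simpa only [rpow_natCast] using this
  have hfg {δ : ℝ} (hδ : 0 < δ) (r : ℝ) (hr : 0 < r) :
      r ^ (finrank ℝ E - 1) * (exp (-a * r ^ 2) / (δ * (δ + ν₀ * r))) ≤
        r ^ k * exp (-a * r ^ 2) / (ν₀ * δ) := by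
    rw [hk, show k + 2 - 1 = k + 1 by omega, pow_succ, mul_div_assoc',
      div_le_div_iff₀ (by positivity) (by positivity)]
    have : 0 ≤ r ^ k * exp (-a * r ^ 2) := by positivity
    nlinarith [mul_nonneg this hδ.le, mul_nonneg (mul_nonneg this hδ.le) hδ.le]
  have hC : 0 ≤ ∫ r in Ioi 0, r ^ k * exp (-a * r ^ 2) :=
    setIntegral_nonneg measurableSet_Ioi fun r (hr : 0 < r) => by positivity
  refine ⟨finrank ℝ E * μ.real (ball 0 1) * (∫ r in Ioi 0, r ^ k * exp (-a * r ^ 2)) / ν₀,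
    by positivity, fun δ hδ => ?_⟩
  obtain ⟨hint, hle⟩ := integrable_fun_norm_and_integral_fun_norm_le μ
    (f := fun r => exp (-a * r ^ 2) / (δ * (δ + ν₀ * r))) (by fun_prop)
    (fun r hr => ⟨by positivity, hfg hδ r hr⟩) (hg.div_const (ν₀ * δ))
  refine ⟨hint, hle.trans_eq ?_⟩
  rw [integral_div]
  field_simp

end RadialIntegral

theorem inv_sq_add_affine_sq_eq_cauchyPDFReal {δ s : ℝ} (hδ : 0 < δ) (hs : 0 < s) (c t : ℝ) :
    (δ ^ 2 + (c + s * t) ^ 2)⁻¹ =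
      π / (δ * s) * cauchyPDFReal (-c / s) (δ / s).toNNReal t := by
  rw [cauchyPDFReal_def, Real.coe_toNNReal _ (by positivity)]
  have : 0 < δ ^ 2 + (c + s * t) ^ 2 := by positivity
  field_simp
  ring

theorem integrable_inv_sq_add_affine_sq {δ s : ℝ} (hδ : 0 < δ) (hs : 0 < s) (c : ℝ) :
    Integrable fun t => (δ ^ 2 + (c + s * t) ^ 2)⁻¹ := by
  simp_rw [inv_sq_add_affine_sq_eq_cauchyPDFReal hδ hs]
  exact (integrable_cauchyPDFReal _).const_mul _

theorem integral_inv_sq_add_affine_sq {δ s : ℝ} (hδ : 0 < δ) (hs : 0 < s) (c : ℝ) :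
    ∫ t, (δ ^ 2 + (c + s * t) ^ 2)⁻¹ = π / (δ * s) := by
  rw [integral_congr_ae (.of_forall (inv_sq_add_affine_sq_eq_cauchyPDFReal hδ hs c)),
    integral_const_mul, integral_cauchyPDFReal_eq_one, mul_one]
  simpa using div_pos hδ hs

section OrthonormalCoordinates

variable {E : Type*} [NormedAddCommGroup E] [InnerProductSpace ℝ E] [FiniteDimensional ℝ E]

theorem exists_orthonormalBasis_apply_zero_eq {n : ℕ} (hE : finrank ℝ E = n + 1) {u : E}
    (hu : ‖u‖ = 1) : ∃ b : OrthonormalBasis (Fin (n + 1)) ℝ E, b 0 = u := by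
  have hon : Orthonormal ℝ (({0} : Set (Fin (n + 1))).domRestrict fun _ => u) :=
    orthonormal_subsingleton_iff.2 fun _ => hu
  obtain ⟨b, hb⟩ := hon.exists_orthonormalBasis_extension_of_card_eq (by simpa using hE)
  exact ⟨b, hb 0 rfl⟩

variable [MeasurableSpace E] [BorelSpace E]

theorem integrable_exp_neg_mul_sq_norm_div_inner_and_integral_le {n : ℕ}
    (hE : finrank ℝ E = n + 1) {a δ : ℝ} (ha : 0 < a) (hδ : 0 < δ) (c : ℝ) {η : E} (hη : η ≠ 0) :
    Integrable (fun v => exp (-a * ‖v‖ ^ 2) / (δ ^ 2 + (c + inner ℝ v η) ^ 2)) ∧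
      ∫ v, exp (-a * ‖v‖ ^ 2) / (δ ^ 2 + (c + inner ℝ v η) ^ 2) ≤
        π * √(π / a) ^ n / (δ * ‖η‖) := by
  have hη0 : 0 < ‖η‖ := norm_pos_iff.2 hη
  have hu : ‖‖η‖⁻¹ • η‖ = 1 := by rw [norm_smul, norm_inv, norm_norm, inv_mul_cancel₀ hη0.ne']
  obtain ⟨b, hb⟩ := exists_orthonormalBasis_apply_zero_eq hE hu
  let e : E ≃ᵐ (Fin (n + 1) → ℝ) := b.measurableEquiv.trans (MeasurableEquiv.toLp 2 _).symm
  have he : MeasurePreserving e := b.measurePreserving_measurableEquiv.trans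
    (EuclideanSpace.volume_preserving_symm_measurableEquiv_toLp _)
  have he_apply (v : E) (i) : e v i = inner ℝ (b i) v := b.repr_apply_apply v i
  have hnorm (v : E) : ‖v‖ ^ 2 = e v 0 ^ 2 + ∑ i : Fin n, e v i.succ ^ 2 := by
    rw [← b.repr.norm_map, EuclideanSpace.real_norm_sq_eq, Fin.sum_univ_succ]; rfl
  have hinner (v : E) : inner ℝ v η = ‖η‖ * e v 0 := by
    rw [he_apply, hb, real_inner_smul_left, real_inner_comm, mul_inv_cancel_left₀ hη0.ne']
  let F : Fin (n + 1) → ℝ → ℝ := Fin.cons (fun t => (δ ^ 2 + (c + ‖η‖ * t) ^ 2)⁻¹)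
    fun _ t => exp (-a * t ^ 2)
  have hPint : Integrable fun v => ∏ i, F i (e v i) :=
    (he.integrable_comp_emb e.measurableEmbedding).2 <| Integrable.fintype_prod <|
      Fin.cases (integrable_inv_sq_add_affine_sq hδ hη0 c) fun _ => integrable_exp_neg_mul_sq ha
  have hP : ∫ v, ∏ i, F i (e v i) = π / (δ * ‖η‖) * √(π / a) ^ n := by
    rw [he.integral_comp' (fun x => ∏ i, F i (x i)), integral_fintype_prod_volume_eq_prod,
      Fin.prod_univ_succ]
    simp only [F, Fin.cons_zero, Fin.cons_succ, integral_inv_sq_add_affine_sq hδ hη0,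
      integral_gaussian, Finset.prod_const, Finset.card_univ, Fintype.card_fin]
  have hdom (v : E) :
      exp (-a * ‖v‖ ^ 2) / (δ ^ 2 + (c + inner ℝ v η) ^ 2) ≤ ∏ i, F i (e v i) := by
    rw [Fin.prod_univ_succ, hnorm, hinner, div_eq_mul_inv, mul_comm]
    simp only [F, Fin.cons_zero, Fin.cons_succ, ← exp_sum]
    gcongr
    rw [← Finset.mul_sum]
    nlinarith [sq_nonneg (e v 0)]
  obtain ⟨hint, hle⟩ := integrable_and_integral_le_of_le hPint
    (Measurable.aestronglyMeasurable (by fun_prop)) (fun v => by positivity) hdom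
  exact ⟨hint, hle.trans_eq (by rw [hP, div_mul_eq_mul_div])⟩

theorem exists_integral_exp_neg_mul_sq_norm_div_sq_add_sq_le {n : ℕ}
    (hE : finrank ℝ E = n + 2) {a ν₀ : ℝ} (ha : 0 < a) (hν₀ : 0 < ν₀) :
    ∃ K > 0, ∀ δ > 0, ∀ (c : ℝ) (η : E),
      Integrable (fun v => exp (-a * ‖v‖ ^ 2) / ((δ + ν₀ * ‖v‖) ^ 2 + (c + inner ℝ v η) ^ 2)) ∧
        ∫ v, exp (-a * ‖v‖ ^ 2) / ((δ + ν₀ * ‖v‖) ^ 2 + (c + inner ℝ v η) ^ 2) ≤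
          K / (δ * (1 + ‖η‖)) := by
  obtain ⟨K₁, hK₁, hsmall⟩ :=
    exists_integral_exp_neg_mul_sq_norm_div_le (volume : Measure E) (by omega) ha hν₀
  set K₂ := π * √(π / a) ^ (n + 1)
  have hK₂ : 0 < K₂ := by positivity
  refine ⟨2 * (K₁ + K₂), by positivity, fun δ hδ c η => ?_⟩
  have hm : AEStronglyMeasurable
      (fun v : E => exp (-a * ‖v‖ ^ 2) / ((δ + ν₀ * ‖v‖) ^ 2 + (c + inner ℝ v η) ^ 2)) :=
    Measurable.aestronglyMeasurable (by fun_prop)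
  have hpos (v : E) : 0 < δ + ν₀ * ‖v‖ := by positivity
  rcases le_or_gt ‖η‖ 1 with hη | hη
  · obtain ⟨hint, hle⟩ := integrable_and_integral_le_of_le (hsmall δ hδ).1 hm
      (fun v => by positivity) fun v => by
        have := hpos v
        gcongr
        nlinarith [sq_nonneg (c + inner ℝ v η), mul_nonneg hν₀.le (norm_nonneg v)]
    refine ⟨hint, hle.trans <| (hsmall δ hδ).2.trans ?_⟩
    rw [div_le_div_iff₀ hδ (by positivity)]
    nlinarith [mul_nonneg (mul_nonneg hK₁ hδ.le) (sub_nonneg.2 hη), mul_pos hK₂ hδ]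
  · have hcauchy := integrable_exp_neg_mul_sq_norm_div_inner_and_integral_le hE ha hδ c
      (norm_pos_iff.1 (by linarith : 0 < ‖η‖))
    obtain ⟨hint, hle⟩ := integrable_and_integral_le_of_le hcauchy.1 hm
      (fun v => by positivity) fun v => by
        have := hpos v
        gcongr
        nlinarith [mul_nonneg hν₀.le (norm_nonneg v)]
    refine ⟨hint, hle.trans <| hcauchy.2.trans ?_⟩
    rw [div_le_div_iff₀ (by positivity) (by positivity)]
    nlinarith [mul_nonneg (mul_nonneg hK₁ hδ.le) (norm_nonneg η),
      mul_pos (mul_pos hK₂ hδ) (by linarith : (0 : ℝ) < ‖η‖ - 1)]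

end OrthonormalCoordinates

theorem sq_norm_add_ofReal_add_I_mul (lam : ℂ) (x y : ℝ) :
    ‖lam + x + Complex.I * y‖ ^ 2 = (lam.re + x) ^ 2 + (lam.im + y) ^ 2 := by
  rw [Complex.sq_norm, Complex.normSq_apply]
  simp only [Complex.add_re, Complex.add_im, Complex.mul_re, Complex.mul_im,
    Complex.I_re, Complex.I_im, Complex.ofReal_re, Complex.ofReal_im]
  ring

theorem sq_chiB_div_norm_sq_le {ν₀ δ ε t : ℝ} {lam : ℂ} (hν₀ : 0 ≤ ν₀) (hδ : 0 < δ)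
    (hlam : -ν₀ + δ ≤ lam.re) (j : Fin 5) {v ξ : EuclideanSpace ℝ (Fin 3)}
    (ht : ν₀ * (1 + ‖v‖) ≤ t) :
    chiB j v ^ 2 / ‖lam + t + Complex.I * ((ε * inner ℝ v ξ : ℝ) : ℂ)‖ ^ 2 ≤
      96 * (exp (-(1 / 4) * ‖v‖ ^ 2) /
        ((δ + ν₀ * ‖v‖) ^ 2 + (lam.im + inner ℝ v (ε • ξ)) ^ 2)) := by
  rw [sq_norm_add_ofReal_add_I_mul, inner_smul_right, mul_div_assoc']
  have hre : δ + ν₀ * ‖v‖ ≤ lam.re + t := by linarith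
  have : 0 < δ + ν₀ * ‖v‖ := by positivity
  gcongr
  exact sq_chiB_le_exp j v

theorem sqrt_div_mul_eq_mul_rpow {B x y : ℝ} (hB : 0 ≤ B) (hx : 0 ≤ x) (hy : 0 ≤ y) :
    √(B / (x * y)) = √B * x ^ (-(1 : ℝ) / 2) * y ^ (-(1 : ℝ) / 2) := by
  rw [sqrt_eq_rpow, sqrt_eq_rpow, div_rpow hB (mul_nonneg hx hy), mul_rpow hx hy, neg_div,
    rpow_neg hx, rpow_neg hy, div_eq_mul_inv, mul_inv, mul_assoc]

theorem stmt13_general (ν₀ ν₁ : ℝ) (hν₀ : 0 < ν₀) :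
    ∃ C > (0:ℝ),
      ∀ ν : EuclideanSpace ℝ (Fin 3) → ℝ, Measurable ν →
        (∀ v, ν₀ * (1 + ‖v‖) ≤ ν v ∧ ν v ≤ ν₁ * (1 + ‖v‖)) →
        ∀ ε ∈ Set.Icc (0:ℝ) 1, ∀ ξ : EuclideanSpace ℝ (Fin 3), ∀ δ : ℝ, 0 < δ →
        ∀ lam : ℂ, -ν₀ + δ ≤ lam.re → ∀ j : Fin 5,
          Real.sqrt (∫ v : EuclideanSpace ℝ (Fin 3),
              (chiB j v)^2 /
                (‖(lam + (ν v : ℂ) +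
                  Complex.I * ((ε * (inner ℝ v ξ : ℝ) : ℝ) : ℂ))‖)^2)
            ≤ C * δ ^ (-(1:ℝ)/2) * (1 + ε * ‖ξ‖) ^ (-(1:ℝ)/2) := by
  obtain ⟨K, hK, hweight⟩ := exists_integral_exp_neg_mul_sq_norm_div_sq_add_sq_le
    (E := EuclideanSpace ℝ (Fin 3)) finrank_euclideanSpace_fin (by norm_num : (0 : ℝ) < 1 / 4) hν₀
  refine ⟨√(96 * K), by positivity, fun ν _ hν ε hε ξ δ hδ lam hlam j => ?_⟩
  obtain ⟨hint, hle⟩ := hweight δ hδ lam.im (ε • ξ)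
  rw [norm_smul, Real.norm_of_nonneg hε.1] at hle
  rw [← sqrt_div_mul_eq_mul_rpow (by positivity) hδ.le (by positivity [hε.1])]
  refine sqrt_le_sqrt ?_
  calc _ ≤ ∫ v, 96 * (exp (-(1 / 4) * ‖v‖ ^ 2) /
          ((δ + ν₀ * ‖v‖) ^ 2 + (lam.im + inner ℝ v (ε • ξ)) ^ 2)) :=
        integral_mono_of_nonneg (.of_forall fun v => by positivity) (hint.const_mul 96)
          (.of_forall fun v => sq_chiB_div_norm_sq_le hν₀.le hδ hlam j (hν v).1)
    _ ≤ 96 * K / (δ * (1 + ε * ‖ξ‖)) := by rw [integral_const_mul, mul_div_assoc]; gcongr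

theorem stmt13 (ν₀ ν₁ : ℝ) (hν₀ : 0 < ν₀) (hν₁ : 0 < ν₁) :
    ∃ C > (0:ℝ),
      ∀ ν : EuclideanSpace ℝ (Fin 3) → ℝ, Measurable ν →
        (∀ v, ν₀ * (1 + ‖v‖) ≤ ν v ∧ ν v ≤ ν₁ * (1 + ‖v‖)) →
        ∀ ε ∈ Set.Icc (0:ℝ) 1, ∀ ξ : EuclideanSpace ℝ (Fin 3), ∀ δ : ℝ, 0 < δ →
        ∀ lam : ℂ, -ν₀ + δ ≤ lam.re → ∀ j : Fin 5,
          Real.sqrt (∫ v : EuclideanSpace ℝ (Fin 3),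
              (chiB j v)^2 /
                (‖(lam + (ν v : ℂ) +
                  Complex.I * ((ε * (inner ℝ v ξ : ℝ) : ℝ) : ℂ))‖)^2)
            ≤ C * δ ^ (-(1:ℝ)/2) * (1 + ε * ‖ξ‖) ^ (-(1:ℝ)/2) :=
  stmt13_general ν₀ ν₁ hν₀

end
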